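/- Let d ≥ 2, r > 0, a ∈ ℝ^d, and let Λ : ℝ^d → ℝ^d be a bijective linear map with η(Λp, Λq) = η(p, q) for all p, q and with (Λp)⁰ > 0 whenever η(p, p) < 0 and p⁰ > 0. Then for all measurable φ, ψ : ℝ^d → ℂ, ∫ conj( e^{−i η(p,a)} φ(Λ⁻¹ p) ) · e^{−i η(p,a)} ψ(Λ⁻¹ p) dμ_r^+(p) = ∫ conj(φ(p)) ψ(p) dμ_r^+(p); in particular the map ψ ↦ ( p ↦ e^{−i η(p,a)} ψ(Λ⁻¹ p) ) preserves the L²(μ_r^+) inner product. -/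

import Mathlib

/-!
Since `|e^{-iη(p,a)}| = 1`, the identity says that `μ_r^+` is invariant under `Λ⁻¹`, which is
again an orthochronous Lorentz transformation. Invariance follows from a cone argument: for a
Borel set `S`, the truncated cone `(0,1] • (S ∩ V_r^+)` has Lebesgue measure
`2r/(m+1) · μ_r^+(S)`, by the change of variables `q ↦ q⁰ (ω_r(q⃗), q⃗)` with Jacobian
`(q⁰)^m r / ω_r(q⃗)`. A Lorentz transformation maps these cones to cones (it preserves `V_r^+`
and commutes with scaling) and has `|det Λ| = 1`, so it preserves their Lebesgue measure, hence
preserves `μ_r^+`.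
-/

open MeasureTheory

noncomputable section

/-- Minkowski inner product on `ℝ^{m+1}`: `η(p,q) = -p⁰q⁰ + Σ_{j=1}^{m} pʲqʲ`. -/
def eta {m : ℕ} (p q : EuclideanSpace ℝ (Fin (m + 1))) : ℝ :=
  -(p 0 * q 0) + ∑ j : Fin m, p j.succ * q j.succ

/-- `ω_r(p⃗) = √(|p⃗|² + r)`. -/
def omg {m : ℕ} (r : ℝ) (v : EuclideanSpace ℝ (Fin m)) : ℝ :=
  Real.sqrt (‖v‖ ^ 2 + r)

/-- Embedding of `ℝ^m` onto the forward mass shell: `p⃗ ↦ (ω_r(p⃗), p⃗)`. -/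
def embed {m : ℕ} (r : ℝ) (v : EuclideanSpace ℝ (Fin m)) :
    EuclideanSpace ℝ (Fin (m + 1)) :=
  WithLp.toLp 2 (Fin.cons (omg r v) v.ofLp : Fin (m + 1) → ℝ)

/-- The forward mass-shell measure `μ_r^+`. -/
def massShellMeasure (m : ℕ) (r : ℝ) : Measure (EuclideanSpace ℝ (Fin (m + 1))) :=
  Measure.map (embed r)
    (volume.withDensity fun v => ENNReal.ofReal ((2 * omg r v)⁻¹))

open Set
open scoped RealInnerProductSpace ENNReal Pointwise

local notation:max "ℝ^" n:max => EuclideanSpace ℝ (Fin n)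

lemma LinearMap.BilinForm.det_mul_self_eq_one_of_compl₁₂_self {R M ι : Type*} [CommRing R]
    [IsDomain R] [AddCommGroup M] [Module R M] [Fintype ι] [DecidableEq ι]
    (b : Module.Basis ι R M) {B : LinearMap.BilinForm R M}
    (hB : (LinearMap.toMatrix₂ b b B).det ≠ 0) {f : M →ₗ[R] M}
    (hf : B.compl₁₂ f f = B) : LinearMap.det f * LinearMap.det f = 1 := by
  have hdet := congrArg Matrix.det (LinearMap.toMatrix₂_compl₁₂ b b b b B f f)
  rw [hf, Matrix.det_mul, Matrix.det_mul, Matrix.det_transpose, LinearMap.det_toMatrix] at hdet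
  exact mul_right_cancel₀ hB (by linear_combination -hdet)

lemma EuclideanSpace.toMatrix_basisFun_apply {𝕜 ι : Type*} [RCLike 𝕜] [Fintype ι]
    [DecidableEq ι] (f : EuclideanSpace 𝕜 ι →ₗ[𝕜] EuclideanSpace 𝕜 ι) (i j : ι) :
    LinearMap.toMatrix (EuclideanSpace.basisFun ι 𝕜).toBasis
      (EuclideanSpace.basisFun ι 𝕜).toBasis f i j = f (EuclideanSpace.single j 1) i := by
  rw [LinearMap.toMatrix_apply, OrthonormalBasis.coe_toBasis_repr_apply,
    OrthonormalBasis.coe_toBasis, EuclideanSpace.basisFun_apply, EuclideanSpace.basisFun_repr]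

lemma Set.image_smul_of_linearMapClass {R M N F : Type*} [Semiring R] [AddCommMonoid M]
    [AddCommMonoid N] [Module R M] [Module R N] [FunLike F M N] [LinearMapClass F R M N]
    (f : F) (T : Set R) (U : Set M) :
    f '' (T • U) = T • f '' U :=
  Set.image_image2_distrib_right fun t p => map_smul f t p

namespace Matrix

lemma det_fromBlocks_border {R n : Type*} [CommRing R] [Fintype n] [DecidableEq n]
    (a t : R) (b c : n → R) :
    (fromBlocks (of fun _ _ => a : Matrix (Fin 1) (Fin 1) R) (t • replicateRow (Fin 1) b)
      (replicateCol (Fin 1) c) (t • 1)).det = t ^ Fintype.card n * (a - b ⬝ᵥ c) := by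
  have hfactor : fromBlocks (of fun _ _ => a : Matrix (Fin 1) (Fin 1) R)
      (t • replicateRow (Fin 1) b) (replicateCol (Fin 1) c) (t • 1) =
      fromBlocks (of fun _ _ => a) (replicateRow (Fin 1) b) (replicateCol (Fin 1) c) 1 *
        fromBlocks 1 0 0 (t • 1) := by
    simp [fromBlocks_multiply]
  rw [hfactor, det_mul, det_fromBlocks_one₂₂, det_fromBlocks_zero₂₁, det_unique, det_smul]
  simp [dotProduct, mul_comm]

end Matrix

lemma setLIntegral_Ioc_zero_one_ofReal_mul_pow {c : ℝ} (hc : 0 ≤ c) (n : ℕ) :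
    ∫⁻ t in Ioc (0 : ℝ) 1, ENNReal.ofReal (c * t ^ n) = ENNReal.ofReal (c / (n + 1)) := by
  rw [← ofReal_integral_eq_lintegral_ofReal
      ((continuous_pow n).const_mul c).integrableOn_Ioc
      ((ae_restrict_iff' measurableSet_Ioc).2 (.of_forall fun t ht => by
        have := ht.1.le
        positivity)),
    ← intervalIntegral.integral_of_le zero_le_one, intervalIntegral.integral_const_mul,
    integral_pow]
  norm_num [div_eq_mul_inv]

lemma conj_exp_neg_I_mul_mul (x : ℝ) (z w : ℂ) :
    (starRingEnd ℂ) (Complex.exp (-(Complex.I * x)) * z) * (Complex.exp (-(Complex.I * x)) * w) =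
      (starRingEnd ℂ) z * w := by
  have hphase :
      (starRingEnd ℂ) (Complex.exp (-(Complex.I * x))) * Complex.exp (-(Complex.I * x)) = 1 := by
    rw [← Complex.exp_conj, ← Complex.exp_add]
    simp
  calc _ = ((starRingEnd ℂ) (Complex.exp (-(Complex.I * x))) * Complex.exp (-(Complex.I * x))) *
        ((starRingEnd ℂ) z * w) := by rw [map_mul]; ring
    _ = _ := by rw [hphase, one_mul]

namespace Minkowski

variable {m : ℕ}

def spatial : ℝ^(m + 1) →L[ℝ] ℝ^m :=
  LinearMap.toContinuousLinearMap
    { toFun := fun p => WithLp.toLp 2 fun j => p j.succ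
      map_add' := fun _ _ => rfl
      map_smul' := fun _ _ => rfl }

@[simp] lemma spatial_apply (p : ℝ^(m + 1)) (j : Fin m) : spatial p j = p j.succ := rfl

def ofTimeSpace : (ℝ × ℝ^m) ≃L[ℝ] ℝ^(m + 1) :=
  LinearEquiv.toContinuousLinearEquiv <| show (ℝ × ℝ^m) ≃ₗ[ℝ] ℝ^(m + 1) from
    { toFun := fun z => WithLp.toLp 2 (Fin.cons z.1 z.2.ofLp)
      invFun := fun p => (p 0, spatial p)
      map_add' := fun z w => by ext i; cases i using Fin.cases <;> rfl
      map_smul' := fun c z => by ext i; cases i using Fin.cases <;> rfl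
      left_inv := fun _ => rfl
      right_inv := fun p => by ext i; cases i using Fin.cases <;> rfl }

@[simp] lemma ofTimeSpace_apply_zero (z : ℝ × ℝ^m) : ofTimeSpace z 0 = z.1 := rfl

@[simp] lemma spatial_ofTimeSpace (z : ℝ × ℝ^m) : spatial (ofTimeSpace z) = z.2 := rfl

lemma ofTimeSpace_symm_apply (p : ℝ^(m + 1)) : ofTimeSpace.symm p = (p 0, spatial p) := rfl

lemma embed_eq_ofTimeSpace (r : ℝ) (v : ℝ^m) : embed r v = ofTimeSpace (omg r v, v) := rfl

@[simp] lemma embed_apply_zero (r : ℝ) (v : ℝ^m) : embed r v 0 = omg r v := rfl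

@[simp] lemma spatial_embed (r : ℝ) (v : ℝ^m) : spatial (embed r v) = v := rfl

lemma measurePreserving_ofTimeSpace :
    MeasurePreserving (ofTimeSpace (m := m)) volume volume := by
  have hcomp : ⇑(ofTimeSpace (m := m)) = WithLp.toLp 2 ∘
      (MeasurableEquiv.piFinSuccAbove (fun _ => ℝ) 0).symm ∘ Prod.map id WithLp.ofLp := by
    ext z : 1
    exact congrArg (WithLp.toLp 2) (Fin.insertNth_zero' z.1 z.2.ofLp).symm
  rw [hcomp]
  exact (PiLp.volume_preserving_toLp _).comp
    ((volume_preserving_piFinSuccAbove (fun _ => ℝ) 0).symm.comp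
      ((MeasurePreserving.id volume).prod (PiLp.volume_preserving_ofLp _)))

lemma eta_self (p : ℝ^(m + 1)) : eta p p = ‖spatial p‖ ^ 2 - p 0 ^ 2 := by
  rw [eta, EuclideanSpace.norm_sq_eq]
  simp only [spatial_apply, Real.norm_eq_abs, sq, abs_mul_abs_self]
  ring

lemma eta_smul_smul (c : ℝ) (p : ℝ^(m + 1)) : eta (c • p) (c • p) = c ^ 2 * eta p p := by
  simp only [eta_self, map_smul, norm_smul, PiLp.smul_apply, smul_eq_mul, Real.norm_eq_abs]
  rw [mul_pow, mul_pow, sq_abs]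
  ring

lemma omg_pos {r : ℝ} (hr : 0 < r) (v : ℝ^m) : 0 < omg r v :=
  Real.sqrt_pos.2 (by positivity)

lemma omg_sq {r : ℝ} (hr : 0 < r) (v : ℝ^m) : omg r v ^ 2 = ‖v‖ ^ 2 + r :=
  Real.sq_sqrt (by positivity)

lemma continuous_omg (r : ℝ) : Continuous (omg (m := m) r) :=
  Real.continuous_sqrt.comp ((continuous_norm.pow 2).add continuous_const)

lemma continuous_embed (r : ℝ) : Continuous (embed (m := m) r) :=
  ofTimeSpace.continuous.comp ((continuous_omg r).prodMk continuous_id)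

def forwardShell (m : ℕ) (r : ℝ) : Set (ℝ^(m + 1)) := {p | eta p p = -r ∧ 0 < p 0}

lemma embed_mem_forwardShell {r : ℝ} (hr : 0 < r) (v : ℝ^m) :
    embed r v ∈ forwardShell m r := by
  refine ⟨?_, omg_pos hr v⟩
  rw [eta_self, spatial_embed, embed_apply_zero, omg_sq hr]
  ring

lemma embed_spatial_of_mem_forwardShell {r : ℝ} {p : ℝ^(m + 1)} (hp : p ∈ forwardShell m r) :
    embed r (spatial p) = p := by
  obtain ⟨hpp, hp0⟩ := hp
  have htime : omg r (spatial p) = p 0 := by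
    rw [omg, show ‖spatial p‖ ^ 2 + r = p 0 ^ 2 by rw [eta_self] at hpp; linarith,
      Real.sqrt_sq hp0.le]
  rw [embed_eq_ofTimeSpace, htime, ← ofTimeSpace_symm_apply,
    ContinuousLinearEquiv.apply_symm_apply]

lemma range_embed {r : ℝ} (hr : 0 < r) : range (embed (m := m) r) = forwardShell m r :=
  (range_subset_iff.2 (embed_mem_forwardShell hr)).antisymm
    fun _ hp => ⟨_, embed_spatial_of_mem_forwardShell hp⟩

lemma eta_eq_sum (p q : ℝ^(m + 1)) :
    eta p q = ∑ k, (if k = 0 then (-1 : ℝ) else 1) * (p k * q k) := by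
  simp [eta, Fin.sum_univ_succ, Fin.succ_ne_zero]

def etaForm (m : ℕ) : LinearMap.BilinForm ℝ (ℝ^(m + 1)) :=
  LinearMap.mk₂ ℝ eta
    (fun _ _ _ => by
      simp only [eta_eq_sum, PiLp.add_apply, add_mul, mul_add, Finset.sum_add_distrib])
    (fun _ _ _ => by
      simp only [eta_eq_sum, PiLp.smul_apply, smul_eq_mul, Finset.mul_sum]
      exact Finset.sum_congr rfl fun _ _ => by ring)
    (fun _ _ _ => by simp only [eta_eq_sum, PiLp.add_apply, mul_add, Finset.sum_add_distrib])
    (fun _ _ _ => by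
      simp only [eta_eq_sum, PiLp.smul_apply, smul_eq_mul, Finset.mul_sum]
      exact Finset.sum_congr rfl fun _ _ => by ring)

lemma abs_det_eq_one_of_eta_map_map (Λ : ℝ^(m + 1) →ₗ[ℝ] ℝ^(m + 1))
    (hΛ : ∀ p q, eta (Λ p) (Λ q) = eta p q) : |LinearMap.det Λ| = 1 := by
  let b := (EuclideanSpace.basisFun (Fin (m + 1)) ℝ).toBasis
  have hG : LinearMap.toMatrix₂ b b (etaForm m) =
      Matrix.diagonal fun k => if k = 0 then (-1 : ℝ) else 1 := by
    ext i j
    rcases eq_or_ne i j with rfl | hij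
    · simp [LinearMap.toMatrix₂_apply, b, etaForm, eta_eq_sum]
    · simp [LinearMap.toMatrix₂_apply, b, etaForm, eta_eq_sum, hij, hij.symm]
  have hG0 : (LinearMap.toMatrix₂ b b (etaForm m)).det ≠ 0 := by
    rw [hG, Matrix.det_diagonal]
    exact Finset.prod_ne_zero_iff.2 fun k _ => by split_ifs <;> norm_num
  rcases mul_self_eq_one_iff.1 (LinearMap.BilinForm.det_mul_self_eq_one_of_compl₁₂_self b hG0
    (LinearMap.ext₂ hΛ)) with h | h <;> simp [h]

structure IsOrthochronousLorentz (Λ : ℝ^(m + 1) ≃ₗ[ℝ] ℝ^(m + 1)) : Prop where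
  eta_map_map : ∀ p q, eta (Λ p) (Λ q) = eta p q
  time_pos_of_timelike : ∀ p, eta p p < 0 → 0 < p 0 → 0 < Λ p 0

lemma apply_zero_ne_zero_of_eta_self_neg {p : ℝ^(m + 1)} (hp : eta p p < 0) : p 0 ≠ 0 := by
  intro h0
  rw [eta_self, h0] at hp
  nlinarith [sq_nonneg ‖spatial p‖]

namespace IsOrthochronousLorentz

variable {Λ : ℝ^(m + 1) ≃ₗ[ℝ] ℝ^(m + 1)}

lemma symm (hΛ : IsOrthochronousLorentz Λ) : IsOrthochronousLorentz Λ.symm where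
  eta_map_map p q := by
    rw [← hΛ.eta_map_map, Λ.apply_symm_apply, Λ.apply_symm_apply]
  time_pos_of_timelike p hp hp0 := by
    set u := Λ.symm p
    have hu : Λ u = p := Λ.apply_symm_apply p
    have huu : eta u u < 0 := by rwa [← hΛ.eta_map_map, hu]
    refine (apply_zero_ne_zero_of_eta_self_neg huu).lt_or_gt.resolve_left fun hneg => ?_
    -- otherwise `-u` is future-directed but is mapped to the past-directed `-p`
    have := hΛ.time_pos_of_timelike (-u) (by simpa [eta_eq_sum] using huu)
      (by simpa using hneg)
    simp only [map_neg, hu, PiLp.neg_apply] at this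
    linarith

lemma mapsTo_forwardShell (hΛ : IsOrthochronousLorentz Λ) {r : ℝ} (hr : 0 < r) :
    MapsTo Λ (forwardShell m r) (forwardShell m r) := fun _ ⟨hpp, hp0⟩ =>
  ⟨by rw [hΛ.eta_map_map, hpp], hΛ.time_pos_of_timelike _ (by linarith) hp0⟩

lemma image_forwardShell (hΛ : IsOrthochronousLorentz Λ) {r : ℝ} (hr : 0 < r) :
    Λ '' forwardShell m r = forwardShell m r :=
  (hΛ.mapsTo_forwardShell hr).image_subset.antisymm fun p hp =>
    ⟨Λ.symm p, hΛ.symm.mapsTo_forwardShell hr hp, Λ.apply_symm_apply p⟩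

end IsOrthochronousLorentz

lemma hasFDerivAt_omg {r : ℝ} (hr : 0 < r) (v : ℝ^m) :
    HasFDerivAt (omg r) ((omg r v)⁻¹ • innerSL ℝ v) v := by
  have h := ((hasFDerivAt_id v).norm_sq.add_const r).sqrt (by positivity)
  refine h.congr_fderiv ?_
  rw [ContinuousLinearMap.comp_id, id, ← omg, ← Nat.cast_smul_eq_nsmul ℝ, smul_smul]
  congr 1
  field_simp
  norm_num

def embedDeriv (r : ℝ) (v : ℝ^m) : ℝ^m →L[ℝ] ℝ^(m + 1) :=
  ofTimeSpace.toContinuousLinearMap.comp (((omg r v)⁻¹ • innerSL ℝ v).prod (.id ℝ _))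

lemma hasFDerivAt_embed {r : ℝ} (hr : 0 < r) (v : ℝ^m) :
    HasFDerivAt (embed r) (embedDeriv r v) v :=
  ofTimeSpace.hasFDerivAt.comp v ((hasFDerivAt_omg hr v).prodMk (hasFDerivAt_id v))

def coneMap (r : ℝ) (q : ℝ^(m + 1)) : ℝ^(m + 1) := q 0 • embed r (spatial q)

def coneMapDeriv (r : ℝ) (q : ℝ^(m + 1)) : ℝ^(m + 1) →L[ℝ] ℝ^(m + 1) :=
  q 0 • (embedDeriv r (spatial q)).comp spatial +
    (EuclideanSpace.proj 0).smulRight (embed r (spatial q))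

lemma hasFDerivAt_coneMap {r : ℝ} (hr : 0 < r) (q : ℝ^(m + 1)) :
    HasFDerivAt (coneMap r) (coneMapDeriv r q) q :=
  (EuclideanSpace.proj 0).hasFDerivAt.smul
    ((hasFDerivAt_embed hr (spatial q)).comp q spatial.hasFDerivAt)

lemma coneMapDeriv_apply_zero (r : ℝ) (q w : ℝ^(m + 1)) :
    coneMapDeriv r q w 0 =
      q 0 * ((omg r (spatial q))⁻¹ * ⟪spatial q, spatial w⟫) + w 0 * omg r (spatial q) := by
  simp [coneMapDeriv, embedDeriv]

lemma coneMapDeriv_apply_succ (r : ℝ) (q w : ℝ^(m + 1)) (k : Fin m) :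
    coneMapDeriv r q w k.succ = q 0 * w k.succ + w 0 * q k.succ := by
  rfl

@[simp] lemma spatial_single_zero :
    spatial (EuclideanSpace.single (0 : Fin (m + 1)) (1 : ℝ)) = 0 := by
  ext j; simp [Fin.succ_ne_zero]

@[simp] lemma spatial_single_succ (k : Fin m) :
    spatial (EuclideanSpace.single k.succ (1 : ℝ)) = EuclideanSpace.single k 1 := by
  ext j; simp [Fin.succ_inj]

def finOneSumEquiv (m : ℕ) : Fin 1 ⊕ Fin m ≃ Fin (m + 1) where
  toFun := Sum.elim 0 Fin.succ
  invFun := Fin.cases (Sum.inl 0) Sum.inr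
  left_inv := by rintro (x | j) <;> simp [Fin.fin_one_eq_zero]
  right_inv i := by cases i using Fin.cases <;> simp

lemma det_coneMapDeriv {r : ℝ} (hr : 0 < r) (q : ℝ^(m + 1)) :
    (coneMapDeriv r q).det = q 0 ^ m * (r / omg r (spatial q)) := by
  let b := (EuclideanSpace.basisFun (Fin (m + 1)) ℝ).toBasis
  have hblocks : (LinearMap.toMatrix b b (coneMapDeriv r q)).submatrix (finOneSumEquiv m)
      (finOneSumEquiv m) = Matrix.fromBlocks (.of fun _ _ => omg r (spatial q))
        (q 0 • Matrix.replicateRow (Fin 1) ((omg r (spatial q))⁻¹ • spatial q).ofLp)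
        (Matrix.replicateCol (Fin 1) (spatial q).ofLp) (q 0 • 1) := by
    ext (i | l) (j | k) <;>
      simp [b, EuclideanSpace.toMatrix_basisFun_apply, coneMapDeriv_apply_zero,
        coneMapDeriv_apply_succ, finOneSumEquiv, EuclideanSpace.inner_single_right,
        Matrix.one_apply]
  have hnorm : (spatial q).ofLp ⬝ᵥ (spatial q).ofLp = omg r (spatial q) ^ 2 - r := by
    rw [omg_sq hr, EuclideanSpace.norm_sq_eq]
    simp [dotProduct, sq]
  rw [ContinuousLinearMap.det, ← LinearMap.det_toMatrix b, ← Matrix.det_submatrix_equiv_self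
    (finOneSumEquiv m), hblocks, Matrix.det_fromBlocks_border, Fintype.card_fin,
    WithLp.ofLp_smul, smul_dotProduct, hnorm, smul_eq_mul]
  have hω := (omg_pos hr (spatial q)).ne'
  field_simp
  ring

lemma eta_coneMap {r : ℝ} (hr : 0 < r) (q : ℝ^(m + 1)) :
    eta (coneMap r q) (coneMap r q) = -(r * q 0 ^ 2) := by
  rw [coneMap, eta_smul_smul, (embed_mem_forwardShell hr _).1]
  ring

lemma injOn_coneMap {r : ℝ} (hr : 0 < r) : InjOn (coneMap (m := m) r) {q | 0 < q 0} := by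
  intro q hq q' hq' h
  have htime : q 0 = q' 0 := by
    have := eta_coneMap hr q
    rw [h, eta_coneMap hr q'] at this
    nlinarith [mul_pos hr (add_pos (show (0 : ℝ) < q 0 from hq) hq')]
  have hembed : embed r (spatial q) = embed r (spatial q') :=
    smul_right_injective _ (ne_of_gt (show (0 : ℝ) < q' 0 from hq')) (by
      simpa only [coneMap, htime] using h)
  apply ofTimeSpace.symm.injective
  rw [ofTimeSpace_symm_apply, ofTimeSpace_symm_apply, htime, ← spatial_embed r (spatial q),
    hembed, spatial_embed]

lemma smul_inter_forwardShell_eq_image {r : ℝ} (hr : 0 < r) (T : Set ℝ)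
    (S : Set (ℝ^(m + 1))) :
    T • (S ∩ forwardShell m r) = coneMap r '' (ofTimeSpace '' (T ×ˢ (embed r ⁻¹' S))) := by
  rw [← range_embed hr, ← image_preimage_eq_inter_range, ← image_smul_prod, ← image_id T,
    prod_image_image_eq, image_image, image_image, image_id]
  rfl

lemma massShellMeasure_apply (r : ℝ) {S : Set (ℝ^(m + 1))} (hS : MeasurableSet S) :
    massShellMeasure m r S = ∫⁻ v in embed r ⁻¹' S, ENNReal.ofReal ((2 * omg r v)⁻¹) := by
  rw [massShellMeasure, Measure.map_apply (continuous_embed r).measurable hS,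
    withDensity_apply _ ((continuous_embed r).measurable hS)]

theorem volume_smul_inter_forwardShell {r : ℝ} (hr : 0 < r) {S : Set (ℝ^(m + 1))}
    (hS : MeasurableSet S) :
    volume (Ioc (0 : ℝ) 1 • (S ∩ forwardShell m r)) =
      (∫⁻ t in Ioc (0 : ℝ) 1, ENNReal.ofReal (2 * r * t ^ m)) * massShellMeasure m r S := by
  set P := Ioc (0 : ℝ) 1 ×ˢ (embed r ⁻¹' S)
  have hP : MeasurableSet P := measurableSet_Ioc.prod ((continuous_embed r).measurable hS)
  have hemb : MeasurableEmbedding (ofTimeSpace (m := m)) :=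
    ofTimeSpace.toHomeomorph.measurableEmbedding
  have hinj : InjOn (coneMap r) (ofTimeSpace '' P) := (injOn_coneMap hr).mono <| by
    rintro _ ⟨z, hz, rfl⟩
    exact hz.1.1
  have hjac : ∀ z ∈ P, ENNReal.ofReal |(coneMapDeriv r (ofTimeSpace z)).det| * 1 =
      ENNReal.ofReal (2 * r * z.1 ^ m) * ENNReal.ofReal ((2 * omg r z.2)⁻¹) := by
    rintro z ⟨hz, -⟩
    have hz0 : 0 < z.1 := hz.1
    have hω := omg_pos hr z.2
    rw [mul_one, det_coneMapDeriv hr, ofTimeSpace_apply_zero, spatial_ofTimeSpace,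
      ← ENNReal.ofReal_mul (by positivity), abs_of_pos (by positivity)]
    congr 1
    field_simp
  rw [smul_inter_forwardShell_eq_image hr, ← setLIntegral_one,
    lintegral_image_eq_lintegral_abs_det_fderiv_mul volume (hemb.measurableSet_image.2 hP)
      (fun q _ => (hasFDerivAt_coneMap hr q).hasFDerivWithinAt) hinj,
    ← measurePreserving_ofTimeSpace.setLIntegral_comp_emb hemb, setLIntegral_congr_fun hP hjac,
    Measure.volume_eq_prod, ← Measure.prod_restrict, massShellMeasure_apply r hS]
  exact lintegral_prod_mul (f := fun t : ℝ => ENNReal.ofReal (2 * r * t ^ m))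
    (g := fun v : ℝ^m => ENNReal.ofReal ((2 * omg r v)⁻¹))
    (measurable_const.mul (measurable_id.pow_const m)).ennreal_ofReal.aemeasurable
    (measurable_const.mul (continuous_omg r).measurable).inv.ennreal_ofReal.aemeasurable

theorem IsOrthochronousLorentz.map_massShellMeasure {Λ : ℝ^(m + 1) ≃ₗ[ℝ] ℝ^(m + 1)}
    (hΛ : IsOrthochronousLorentz Λ) {r : ℝ} (hr : 0 < r) :
    (massShellMeasure m r).map Λ = massShellMeasure m r := by
  have hcont : Continuous Λ := Λ.toLinearMap.continuous_of_finiteDimensional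
  ext A hA
  rw [Measure.map_apply hcont.measurable hA]
  have hκ : 0 < 2 * r / (m + 1) := by positivity
  refine (ENNReal.mul_right_inj (ENNReal.ofReal_pos.2 hκ).ne' ENNReal.ofReal_ne_top).1 ?_
  rw [← setLIntegral_Ioc_zero_one_ofReal_mul_pow (by positivity),
    ← volume_smul_inter_forwardShell hr (hcont.measurable hA),
    ← volume_smul_inter_forwardShell hr hA]
  calc volume (Ioc (0 : ℝ) 1 • (Λ ⁻¹' A ∩ forwardShell m r))
      = volume (Λ '' (Ioc (0 : ℝ) 1 • (Λ ⁻¹' A ∩ forwardShell m r))) := by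
        rw [← LinearEquiv.coe_coe, Measure.addHaar_image_linearMap,
          abs_det_eq_one_of_eta_map_map _ hΛ.eta_map_map, ENNReal.ofReal_one, one_mul]
    _ = volume (Ioc (0 : ℝ) 1 • (A ∩ forwardShell m r)) := by
        rw [Set.image_smul_of_linearMapClass, image_preimage_inter, hΛ.image_forwardShell hr]

end Minkowski

theorem statement5_general (m : ℕ) (r : ℝ) (hr : 0 < r)
    (a : EuclideanSpace ℝ (Fin (m + 1)))
    (Λ : EuclideanSpace ℝ (Fin (m + 1)) ≃ₗ[ℝ] EuclideanSpace ℝ (Fin (m + 1)))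
    (hη : ∀ p q, eta (Λ p) (Λ q) = eta p q)
    (horth : ∀ p, eta p p < 0 → 0 < p 0 → 0 < (Λ p) 0)
    (φ ψ : EuclideanSpace ℝ (Fin (m + 1)) → ℂ) :
    ∫ p, (starRingEnd ℂ) (Complex.exp (-(Complex.I * (eta p a : ℂ))) * φ (Λ.symm p))
          * (Complex.exp (-(Complex.I * (eta p a : ℂ))) * ψ (Λ.symm p))
        ∂(massShellMeasure m r)
      = ∫ p, (starRingEnd ℂ) (φ p) * ψ p ∂(massShellMeasure m r) := by
  have hΛ : Minkowski.IsOrthochronousLorentz Λ.symm :=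
    Minkowski.IsOrthochronousLorentz.symm ⟨hη, horth⟩
  let e := Λ.symm.toContinuousLinearEquiv.toHomeomorph
  have hpres : MeasurePreserving e (massShellMeasure m r) (massShellMeasure m r) :=
    ⟨e.continuous.measurable, hΛ.map_massShellMeasure hr⟩
  simp_rw [conj_exp_neg_I_mul_mul]
  exact hpres.integral_comp e.measurableEmbedding fun p => (starRingEnd ℂ) (φ p) * ψ p

/-- The map `ψ ↦ (p ↦ e^{−i η(p,a)} ψ(Λ⁻¹ p))` preserves the `L²(μ_r^+)` inner
product for any orthochronous Lorentz transformation `Λ` and any `a ∈ ℝ^d`. -/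
theorem statement5 (m : ℕ) (hm : 1 ≤ m) (r : ℝ) (hr : 0 < r)
    (a : EuclideanSpace ℝ (Fin (m + 1)))
    (Λ : EuclideanSpace ℝ (Fin (m + 1)) ≃ₗ[ℝ] EuclideanSpace ℝ (Fin (m + 1)))
    (hη : ∀ p q, eta (Λ p) (Λ q) = eta p q)
    (horth : ∀ p, eta p p < 0 → 0 < p 0 → 0 < (Λ p) 0)
    (φ ψ : EuclideanSpace ℝ (Fin (m + 1)) → ℂ)
    (hφ : Measurable φ) (hψ : Measurable ψ) :
    ∫ p, (starRingEnd ℂ) (Complex.exp (-(Complex.I * (eta p a : ℂ))) * φ (Λ.symm p))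
          * (Complex.exp (-(Complex.I * (eta p a : ℂ))) * ψ (Λ.symm p))
        ∂(massShellMeasure m r)
      = ∫ p, (starRingEnd ℂ) (φ p) * ψ p ∂(massShellMeasure m r) :=
  statement5_general m r hr a Λ hη horth φ ψ
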